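/- Let \(0 < a < 1\), \(0 < \alpha < 1\), and let \(g: [-\delta,\delta] \to \mathbb{R}\) be a \(C^{1+\alpha}\) function with \(g(0) = 0\), \(g'(0) = a\), Hölder constant \(c_\delta = \sup_{x \neq y} |g'(x)-g'(y)|/|x-y|^\alpha\), and suppose \(g\) maps \([-\delta,\delta]\) into itself. Let \(E_\delta\) be the Banach space of \(C^{1+\alpha}\) functions \(\psi\) on \([-\delta,\delta]\) with \(\psi(0)=\psi'(0)=0\), normed by the Hölder seminorm of the derivative. Then the linear operator \(S_\delta(\psi) = \frac{1}{a}\,\psi \circ g\) maps \(E_\delta\) into itself and has operator norm at most \(\frac{1}{a}\left\{(a + c_\delta \delta^\alpha)^{1+\alpha} + c_\delta \delta^\alpha\right\}\). -/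
import Mathlib


open Set

/-- Membership in the space `E_δ`: the pair `(ψ, ψ')` consists of a function on
`[-δ, δ]` together with its derivative, with `ψ 0 = ψ' 0 = 0` and `ψ'` `α`-Hölder
continuous on `[-δ, δ]`. -/
def MemE (δ α : ℝ) (ψ ψ' : ℝ → ℝ) : Prop :=
  (∀ x ∈ Icc (-δ) δ, HasDerivWithinAt ψ (ψ' x) (Icc (-δ) δ) x) ∧
  ψ 0 = 0 ∧ ψ' 0 = 0 ∧
  ∃ c : ℝ, ∀ x ∈ Icc (-δ) δ, ∀ y ∈ Icc (-δ) δ, |ψ' x - ψ' y| ≤ c * |x - y| ^ α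

/-- The Hölder seminorm of the derivative:
`‖ψ‖ = sup_{x ≠ y} |ψ'(x) - ψ'(y)| / |x-y|^α`. -/
noncomputable def holNorm (δ α : ℝ) (ψ' : ℝ → ℝ) : ℝ :=
  sSup {q : ℝ | ∃ x ∈ Icc (-δ) δ, ∃ y ∈ Icc (-δ) δ, x ≠ y ∧
    q = |ψ' x - ψ' y| / |x - y| ^ α}

/-- The operator `S_δ(ψ) = (1/a) ψ ∘ g` maps the space `E_δ` into itself and its operator
norm is at most `(1/a) {(a + c_δ δ^α)^{1+α} + c_δ δ^α}`, where `g` is a `C^{1+α}`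
self-map of `[-δ, δ]` with `g 0 = 0`, `g' 0 = a ∈ (0,1)` and Hölder constant `c_δ`. -/
theorem stmt_6 (δ α a cδ : ℝ) (hδ : δ ∈ Ioo (0 : ℝ) 1) (hα : α ∈ Ioo (0 : ℝ) 1)
    (ha : a ∈ Ioo (0 : ℝ) 1) (hcδ : 0 ≤ cδ)
    (g g' : ℝ → ℝ)
    (hgderiv : ∀ x ∈ Icc (-δ) δ, HasDerivWithinAt g (g' x) (Icc (-δ) δ) x)
    (hg0 : g 0 = 0) (hg'0 : g' 0 = a)
    (hghold : ∀ x ∈ Icc (-δ) δ, ∀ y ∈ Icc (-δ) δ, |g' x - g' y| ≤ cδ * |x - y| ^ α)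
    (hgmaps : MapsTo g (Icc (-δ) δ) (Icc (-δ) δ)) :
    ∀ ψ ψ' : ℝ → ℝ, MemE δ α ψ ψ' →
      MemE δ α (fun x => (1 / a) * ψ (g x)) (fun x => (1 / a) * (ψ' (g x) * g' x)) ∧
      holNorm δ α (fun x => (1 / a) * (ψ' (g x) * g' x))
        ≤ (1 / a) * ((a + cδ * δ ^ α) ^ (1 + α) + cδ * δ ^ α) * holNorm δ α ψ' := by
  rintro ψ ψ' ⟨hψd, hψ0, hψ'0, c, hc⟩
  obtain ⟨hδ0, hδ1⟩ := hδ
  obtain ⟨hα0, hα1⟩ := hα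
  obtain ⟨ha0, ha1⟩ := ha
  have ha' : (0:ℝ) < 1 / a := by positivity
  set K := a + cδ * δ ^ α with hKdef
  have hδα : (0:ℝ) < δ ^ α := Real.rpow_pos_of_pos hδ0 α
  have hK0 : 0 < K := by positivity
  set M := holNorm δ α ψ' with hMdef
  set S : Set ℝ := {q : ℝ | ∃ x ∈ Icc (-δ) δ, ∃ y ∈ Icc (-δ) δ, x ≠ y ∧
    q = |ψ' x - ψ' y| / |x - y| ^ α} with hSdef
  have hbdd : BddAbove S := by
    refine ⟨c, ?_⟩
    rintro q ⟨x, hx, y, hy, hxy, rfl⟩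
    have hxy' : 0 < |x - y| ^ α :=
      Real.rpow_pos_of_pos (abs_pos.2 (sub_ne_zero.2 hxy)) α
    rw [div_le_iff₀ hxy']
    exact hc x hx y hy
  have hmemδ : δ ∈ Icc (-δ) δ := ⟨by linarith, le_refl δ⟩
  have hmemδ' : -δ ∈ Icc (-δ) δ := ⟨le_refl _, by linarith⟩
  have h0mem : (0:ℝ) ∈ Icc (-δ) δ := ⟨by linarith, le_of_lt hδ0⟩
  have hMeq : M = sSup S := rfl
  have hM0 : 0 ≤ M := by
    have hmem : |ψ' δ - ψ' (-δ)| / |δ - (-δ)| ^ α ∈ S :=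
      ⟨δ, hmemδ, -δ, hmemδ', by intro h; linarith, rfl⟩
    have h1 : (0:ℝ) ≤ |ψ' δ - ψ' (-δ)| / |δ - (-δ)| ^ α := by positivity
    rw [hMeq]
    exact le_trans h1 (le_csSup hbdd hmem)
  have hMkey : ∀ x ∈ Icc (-δ) δ, ∀ y ∈ Icc (-δ) δ,
      |ψ' x - ψ' y| ≤ M * |x - y| ^ α := by
    intro x hx y hy
    rcases eq_or_ne x y with rfl | hxy
    · simp [Real.zero_rpow (ne_of_gt hα0)]
    · have hxy' : 0 < |x - y| ^ α :=
        Real.rpow_pos_of_pos (abs_pos.2 (sub_ne_zero.2 hxy)) α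
      rw [← div_le_iff₀ hxy']
      rw [hMeq]
      exact le_csSup hbdd ⟨x, hx, y, hy, hxy, rfl⟩
  -- bound on g'
  have hg'b : ∀ x ∈ Icc (-δ) δ, |g' x| ≤ K := by
    intro x hx
    have h1 : |g' x - g' 0| ≤ cδ * |x - 0| ^ α := hghold x hx 0 h0mem
    have h2 : |x - 0| ^ α ≤ δ ^ α := by
      apply Real.rpow_le_rpow (abs_nonneg _) _ (le_of_lt hα0)
      rw [sub_zero]
      exact abs_le.2 ⟨hx.1, hx.2⟩
    have h3 : |g' x| ≤ |g' x - g' 0| + |g' 0| := by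
      calc |g' x| = |(g' x - g' 0) + g' 0| := by ring_nf
      _ ≤ |g' x - g' 0| + |g' 0| := abs_add_le _ _
    have h4 : |g' 0| = a := by rw [hg'0, abs_of_pos ha0]
    have h5 : cδ * |x - 0| ^ α ≤ cδ * δ ^ α := by
      exact mul_le_mul_of_nonneg_left h2 hcδ
    rw [hKdef]; linarith
  -- Lipschitz bound on g
  have hglip : ∀ x ∈ Icc (-δ) δ, ∀ y ∈ Icc (-δ) δ, |g x - g y| ≤ K * |x - y| := by
    intro x hx y hy
    have := Convex.norm_image_sub_le_of_norm_hasDerivWithin_le hgderiv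
      (fun z hz => by simpa [Real.norm_eq_abs] using hg'b z hz) (convex_Icc _ _) hy hx
    simpa [Real.norm_eq_abs] using this
  -- bound on |ψ' z| for z in image
  have hψ'b : ∀ z ∈ Icc (-δ) δ, |ψ' z| ≤ M * δ ^ α := by
    intro z hz
    have h1 : |ψ' z - ψ' 0| ≤ M * |z - 0| ^ α := hMkey z hz 0 h0mem
    have h2 : |z - 0| ^ α ≤ δ ^ α := by
      apply Real.rpow_le_rpow (abs_nonneg _) _ (le_of_lt hα0)
      rw [sub_zero]
      exact abs_le.2 ⟨hz.1, hz.2⟩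
    have h3 : M * |z - 0| ^ α ≤ M * δ ^ α := mul_le_mul_of_nonneg_left h2 hM0
    rw [hψ'0, sub_zero] at h1
    linarith
  -- main Hölder estimate
  have hmain : ∀ x ∈ Icc (-δ) δ, ∀ y ∈ Icc (-δ) δ,
      |(1 / a) * (ψ' (g x) * g' x) - (1 / a) * (ψ' (g y) * g' y)|
        ≤ (1 / a) * ((K ^ (1 + α) + cδ * δ ^ α) * M) * |x - y| ^ α := by
    intro x hx y hy
    have hgx := hgmaps hx
    have hgy := hgmaps hy
    have habs : (0:ℝ) ≤ |x - y| ^ α := Real.rpow_nonneg (abs_nonneg _) α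
    -- |g x - g y|^α ≤ K^α * |x-y|^α
    have h1 : |g x - g y| ^ α ≤ K ^ α * |x - y| ^ α := by
      calc |g x - g y| ^ α ≤ (K * |x - y|) ^ α :=
            Real.rpow_le_rpow (abs_nonneg _) (hglip x hx y hy) (le_of_lt hα0)
        _ = K ^ α * |x - y| ^ α := Real.mul_rpow (le_of_lt hK0) (abs_nonneg _)
    have h2 : |ψ' (g x) - ψ' (g y)| ≤ M * (K ^ α * |x - y| ^ α) := by
      calc |ψ' (g x) - ψ' (g y)| ≤ M * |g x - g y| ^ α := hMkey _ hgx _ hgy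
        _ ≤ M * (K ^ α * |x - y| ^ α) := mul_le_mul_of_nonneg_left h1 hM0
    have h3 : |g' x - g' y| ≤ cδ * |x - y| ^ α := hghold x hx y hy
    have h4 : |ψ' (g y)| ≤ M * δ ^ α := hψ'b _ hgy
    have h5 : |g' x| ≤ K := hg'b x hx
    have hdecomp : ψ' (g x) * g' x - ψ' (g y) * g' y
        = (ψ' (g x) - ψ' (g y)) * g' x + ψ' (g y) * (g' x - g' y) := by ring
    have h6 : |ψ' (g x) * g' x - ψ' (g y) * g' y|
        ≤ M * (K ^ α * |x - y| ^ α) * K + M * δ ^ α * (cδ * |x - y| ^ α) := by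
      rw [hdecomp]
      calc |(ψ' (g x) - ψ' (g y)) * g' x + ψ' (g y) * (g' x - g' y)|
          ≤ |(ψ' (g x) - ψ' (g y)) * g' x| + |ψ' (g y) * (g' x - g' y)| := abs_add_le _ _
        _ = |ψ' (g x) - ψ' (g y)| * |g' x| + |ψ' (g y)| * |g' x - g' y| := by
            rw [abs_mul, abs_mul]
        _ ≤ M * (K ^ α * |x - y| ^ α) * K + M * δ ^ α * (cδ * |x - y| ^ α) := by
            have t1 : |ψ' (g x) - ψ' (g y)| * |g' x| ≤ M * (K ^ α * |x - y| ^ α) * K :=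
              mul_le_mul h2 h5 (abs_nonneg _) (by positivity)
            have t2 : |ψ' (g y)| * |g' x - g' y| ≤ M * δ ^ α * (cδ * |x - y| ^ α) :=
              mul_le_mul h4 h3 (abs_nonneg _) (by positivity)
            linarith
    have hKpow : K ^ ((1:ℝ) + α) = K * K ^ α := by
      rw [Real.rpow_add hK0, Real.rpow_one]
    have h7 : M * (K ^ α * |x - y| ^ α) * K + M * δ ^ α * (cδ * |x - y| ^ α)
        = (K ^ (1 + α) + cδ * δ ^ α) * M * |x - y| ^ α := by
      rw [hKpow]; ring
    calc |(1 / a) * (ψ' (g x) * g' x) - (1 / a) * (ψ' (g y) * g' y)|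
        = (1 / a) * |ψ' (g x) * g' x - ψ' (g y) * g' y| := by
          rw [← mul_sub, abs_mul, abs_of_pos ha']
      _ ≤ (1 / a) * ((K ^ (1 + α) + cδ * δ ^ α) * M * |x - y| ^ α) := by
          apply mul_le_mul_of_nonneg_left _ (le_of_lt ha')
          rw [← h7]; exact h6
      _ = (1 / a) * ((K ^ (1 + α) + cδ * δ ^ α) * M) * |x - y| ^ α := by ring
  have hRHS0 : 0 ≤ (1 / a) * ((K ^ (1 + α) + cδ * δ ^ α) * M) := by
    have : (0:ℝ) ≤ K ^ (1 + α) + cδ * δ ^ α := by positivity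
    exact mul_nonneg (le_of_lt ha') (mul_nonneg this hM0)
  constructor
  · refine ⟨?_, ?_, ?_, ⟨(1 / a) * ((K ^ (1 + α) + cδ * δ ^ α) * M), hmain⟩⟩
    · intro x hx
      exact ((hψd (g x) (hgmaps hx)).comp x (hgderiv x hx) hgmaps).const_mul (1 / a)
    · simp [hg0, hψ0]
    · simp [hg0, hψ'0]
  · have : (1 / a) * ((a + cδ * δ ^ α) ^ (1 + α) + cδ * δ ^ α) * holNorm δ α ψ'
        = (1 / a) * ((K ^ (1 + α) + cδ * δ ^ α) * M) := by
      rw [← hMdef, ← hKdef]; ring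
    rw [this]
    apply Real.sSup_le _ hRHS0
    rintro q ⟨x, hx, y, hy, hxy, rfl⟩
    have hxy' : 0 < |x - y| ^ α :=
      Real.rpow_pos_of_pos (abs_pos.2 (sub_ne_zero.2 hxy)) α
    rw [div_le_iff₀ hxy']
    exact hmain x hx y hy
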